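/- Fix n ≥ 2 and B ≥ 0. The following two statements are equivalent: (1) for every real n × 2 matrix A with orthonormal columns there exist indices i ≠ j such that the 2 × 2 submatrix of A formed by rows i and j has smallest singular value at least B; (2) for every family of vectors a₁, …, a_n ∈ ℝ² with ∑ a_i = 0 and ∑ ‖a_i‖ = 1 there exist indices i ≠ j such that ‖a_i‖ + ‖a_j‖ − ‖a_i + a_j‖ ≥ B². In particular, taking B = 1/√n, the Goreinov–Tyrtyshnikov–Zamarashkin hypothesis for k = 2 is equivalent to the statement that every unit-perimeter closed planar polygon has two sides a_i, a_j with ‖a_i‖ + ‖a_j‖ − ‖a_i + a_j‖ ≥ 1/n. -/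

import Mathlib

/-!
Read a row `(u, v)` of `A` as the complex number `z = u + iv` and send it to `a = z² / 2`. Then
`∑ zᵢ² = 0` and `∑ |zᵢ|² = 2` say exactly that the columns of `A` are orthonormal, so the rows
of such matrices become the unit-perimeter closed polygons, all of them since complex square
roots exist. For a unit `w`, the quadratic form of rows `i, j` at `w` is
`|aᵢ| + |aⱼ| + Re(conj(aᵢ + aⱼ) w²)`, and as `w²` runs over the whole unit circle its minimum is
`|aᵢ| + |aⱼ| - |aᵢ + aⱼ|`.
-/

open Matrix ComplexConjugate

def PolygonBound (E : Type*) [SeminormedAddCommGroup E] (ι : Type*) [Fintype ι] (c : ℝ) : Prop :=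
  ∀ a : ι → E, (∑ i, a i = 0) → (∑ i, ‖a i‖ = 1) →
    ∃ i j : ι, i ≠ j ∧ c ≤ ‖a i‖ + ‖a j‖ - ‖a i + a j‖

section PolygonBound

variable {E F : Type*} [SeminormedAddCommGroup E] [NormedSpace ℝ E]
  [SeminormedAddCommGroup F] [NormedSpace ℝ F] {ι : Type*} [Fintype ι] {c : ℝ}

theorem PolygonBound.comp_linearIsometry (h : PolygonBound F ι c) (e : E →ₗᵢ[ℝ] F) :
    PolygonBound E ι c := by
  intro a hsum hper
  obtain ⟨i, j, hij, hb⟩ := h (e ∘ a) (by simp [← map_sum, hsum]) (by simpa using hper)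
  exact ⟨i, j, hij, by simpa [← map_add] using hb⟩

theorem LinearIsometryEquiv.polygonBound_iff (e : E ≃ₗᵢ[ℝ] F) :
    PolygonBound E ι c ↔ PolygonBound F ι c :=
  ⟨fun h => h.comp_linearIsometry e.symm.toLinearIsometry,
    fun h => h.comp_linearIsometry e.toLinearIsometry⟩

end PolygonBound

namespace Complex

theorem neg_norm_le_re (z : ℂ) : -‖z‖ ≤ z.re :=
  neg_le_of_abs_le (abs_re_le_norm z)

theorem exists_norm_eq_one_mul_sq_eq_neg_norm (p : ℂ) :
    ∃ w : ℂ, ‖w‖ = 1 ∧ p * w ^ 2 = -‖p‖ := by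
  rcases eq_or_ne p 0 with rfl | hp
  · exact ⟨1, by simp⟩
  obtain ⟨w, hw⟩ := IsAlgClosed.exists_pow_nat_eq (-‖p‖ / p : ℂ) two_pos
  refine ⟨w, ?_, by rw [hw]; field_simp⟩
  have : ‖w‖ ^ 2 = 1 := by
    rw [← norm_pow, hw, norm_div, norm_neg, norm_real, norm_norm, div_self (norm_ne_zero_iff.2 hp)]
  exact (pow_eq_one_iff_of_nonneg (norm_nonneg w) two_ne_zero).1 this

theorem forall_norm_eq_one_le_add_re_mul_sq_iff (p : ℂ) (s c : ℝ) :
    (∀ w : ℂ, ‖w‖ = 1 → c ≤ s + (p * w ^ 2).re) ↔ c ≤ s - ‖p‖ := by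
  constructor
  · intro h
    obtain ⟨w, hw, hpw⟩ := exists_norm_eq_one_mul_sq_eq_neg_norm p
    simpa [hpw, sub_eq_add_neg] using h w hw
  · intro h w hw
    have := neg_norm_le_re (p * w ^ 2)
    rw [norm_mul, norm_pow, hw, one_pow, mul_one] at this
    linarith

end Complex

namespace Matrix

variable {ι : Type*}

noncomputable def hausmannKnutson (A : Matrix ι (Fin 2) ℝ) (i : ι) : ℂ :=
  (⟨A i 0, A i 1⟩ : ℂ) ^ 2 / 2

variable (A : Matrix ι (Fin 2) ℝ)

theorem hausmannKnutson_re (i : ι) : (A.hausmannKnutson i).re = (A i 0 ^ 2 - A i 1 ^ 2) / 2 := by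
  simp [hausmannKnutson, sq]

theorem hausmannKnutson_im (i : ι) : (A.hausmannKnutson i).im = A i 0 * A i 1 := by
  simp [hausmannKnutson, sq]; ring

theorem norm_hausmannKnutson (i : ι) : ‖A.hausmannKnutson i‖ = (A i 0 ^ 2 + A i 1 ^ 2) / 2 := by
  rw [hausmannKnutson, norm_div, norm_pow, Complex.sq_norm, Complex.normSq_mk]
  simp [sq]

theorem hausmannKnutson_surjective : Function.Surjective (hausmannKnutson (ι := ι)) := by
  intro a
  choose z hz using fun i => IsAlgClosed.exists_pow_nat_eq (2 * a i) two_pos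
  refine ⟨of fun i => ![(z i).re, (z i).im], funext fun i => ?_⟩
  simp [hausmannKnutson, hz]

theorem transpose_mul_self_eq_one_iff [Fintype ι] :
    Aᵀ * A = 1 ↔ (∑ i, A.hausmannKnutson i = 0) ∧ ∑ i, ‖A.hausmannKnutson i‖ = 1 := by
  simp only [← ext_iff, Fin.forall_fin_two, mul_apply, transpose_apply, one_apply,
    Complex.ext_iff, Complex.re_sum, Complex.im_sum, hausmannKnutson_re, hausmannKnutson_im,
    norm_hausmannKnutson, ← Finset.sum_div, Finset.sum_sub_distrib, Finset.sum_add_distrib]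
  simp only [mul_comm (A _ 1), ← sq]
  norm_num
  constructor
  · rintro ⟨⟨h00, h01⟩, -, h11⟩
    refine ⟨⟨by linarith, h01⟩, by linarith⟩
  · rintro ⟨⟨h0, h01⟩, hper⟩
    refine ⟨⟨by linarith, h01⟩, h01, by linarith⟩

theorem sq_add_sq_eq_add_re_conj_mul_sq (i j : ι) (w : ℂ) (hw : w.re ^ 2 + w.im ^ 2 = 1) :
    (A i 0 * w.re + A i 1 * w.im) ^ 2 + (A j 0 * w.re + A j 1 * w.im) ^ 2 =
      ‖A.hausmannKnutson i‖ + ‖A.hausmannKnutson j‖ +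
        (conj (A.hausmannKnutson i + A.hausmannKnutson j) * w ^ 2).re := by
  simp only [Complex.mul_re, Complex.conj_re, Complex.conj_im, Complex.add_re, Complex.add_im,
    hausmannKnutson_re, hausmannKnutson_im, norm_hausmannKnutson, sq w, Complex.mul_im]
  linear_combination (A i 0 ^ 2 + A i 1 ^ 2 + A j 0 ^ 2 + A j 1 ^ 2) / 2 * hw

theorem forall_le_sq_add_sq_iff (i j : ι) (c : ℝ) :
    (∀ x : ℝ × ℝ, x.1 ^ 2 + x.2 ^ 2 = 1 →
      c ≤ (A i 0 * x.1 + A i 1 * x.2) ^ 2 + (A j 0 * x.1 + A j 1 * x.2) ^ 2) ↔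
    c ≤ ‖A.hausmannKnutson i‖ + ‖A.hausmannKnutson j‖ -
      ‖A.hausmannKnutson i + A.hausmannKnutson j‖ := by
  rw [← Complex.norm_conj (A.hausmannKnutson i + A.hausmannKnutson j),
    ← Complex.forall_norm_eq_one_le_add_re_mul_sq_iff,
    ← Complex.equivRealProd.forall_congr_right]
  refine forall_congr' fun w => ?_
  have hw : ‖w‖ = 1 ↔ w.re ^ 2 + w.im ^ 2 = 1 := by
    rw [← pow_eq_one_iff_of_nonneg (norm_nonneg w) two_ne_zero, Complex.sq_norm,
      Complex.normSq_apply, sq, sq]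
  simp only [Complex.equivRealProd_apply, hw]
  exact imp_congr_right fun hw => by rw [A.sq_add_sq_eq_add_re_conj_mul_sq i j w hw]

end Matrix

def SubmatrixBound (ι : Type*) [Fintype ι] (c : ℝ) : Prop :=
  ∀ A : Matrix ι (Fin 2) ℝ, Aᵀ * A = 1 →
    ∃ i j : ι, i ≠ j ∧ ∀ x : ℝ × ℝ, x.1 ^ 2 + x.2 ^ 2 = 1 →
      c ≤ (A i 0 * x.1 + A i 1 * x.2) ^ 2 + (A j 0 * x.1 + A j 1 * x.2) ^ 2

theorem submatrixBound_iff_polygonBound (ι : Type*) [Fintype ι] (c : ℝ) :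
    SubmatrixBound ι c ↔ PolygonBound ℂ ι c := by
  simp only [SubmatrixBound, Matrix.forall_le_sq_add_sq_iff, Matrix.transpose_mul_self_eq_one_iff]
  constructor
  · intro h a hsum hper
    obtain ⟨A, rfl⟩ := Matrix.hausmannKnutson_surjective a
    exact h A ⟨hsum, hper⟩
  · exact fun h A hA => h _ hA.1 hA.2

theorem submatrix_bound_iff_polygon_bound (n : ℕ) (B : ℝ) :
    (∀ A : Matrix (Fin n) (Fin 2) ℝ, Aᵀ * A = 1 →
      ∃ i j : Fin n, i ≠ j ∧
        ∀ x : ℝ × ℝ, x.1 ^ 2 + x.2 ^ 2 = 1 →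
          B ^ 2 ≤ (A i 0 * x.1 + A i 1 * x.2) ^ 2 + (A j 0 * x.1 + A j 1 * x.2) ^ 2) ↔
    (∀ a : Fin n → EuclideanSpace ℝ (Fin 2), (∑ i, a i = 0) → (∑ i, ‖a i‖ = 1) →
      ∃ i j : Fin n, i ≠ j ∧ B ^ 2 ≤ ‖a i‖ + ‖a j‖ - ‖a i + a j‖) :=
  (submatrixBound_iff_polygonBound (Fin n) (B ^ 2)).trans
    Complex.orthonormalBasisOneI.repr.polygonBound_iff
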